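/- arXiv:2001.08468 — 4 statements merged into one kernel-verified Lean document; each statement's English description precedes it below -/
import Mathlib

section
/- Let I be an SMI instance, let M_0 be any stable matching of I, let A and B be the sets of men and women matched in M_0, and let N be the order pairing between A and B (the ℓ-th smallest-indexed man of A paired with the ℓ-th smallest-indexed woman of B). Then I admits an SSNM if and only if every pair of N is an acceptable pair and N is a stable matching of I; moreover, in that case N is the unique SSNM of I. -/
open scoped Classical

/-- An SMTI instance: men of type `Mty`, women of type `Wty`.
`mpref m w = some r` means `w` appears on `m`'s preference list with rank `r`
(smaller rank = more preferred; equal ranks = tied); `none` means `w` is not on `m`'s list.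
Similarly for `wpref`.  A pair is acceptable when each lists the other. -/
structure SMTI (Mty : Type) (Wty : Type) where
  mpref : Mty → Wty → Option ℕ
  wpref : Wty → Mty → Option ℕ

namespace SMTI

variable {Mty Wty : Type}

/-- Rank of an optional preference-list entry: `⊤` for an absent entry
(so that being single / unacceptable is worse than any listed partner). -/
def rk (o : Option ℕ) : ℕ∞ := o.elim ⊤ (fun r => (r : ℕ∞))

/-- `(m, w)` is an acceptable pair. -/
def Acc (I : SMTI Mty Wty) (m : Mty) (w : Wty) : Prop :=
  (I.mpref m w).isSome ∧ (I.wpref w m).isSome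

/-- `M` is a matching: a set of acceptable pairs in which each person appears at most once. -/
def IsMatching (I : SMTI Mty Wty) (M : Finset (Mty × Wty)) : Prop :=
  (∀ p ∈ M, I.Acc p.1 p.2) ∧
  (∀ p ∈ M, ∀ q ∈ M, (p.1 = q.1 ∨ p.2 = q.2) → p = q)

/-- Two pairs cross iff one pair's man is above the other pair's man
while its woman is below the other pair's woman. -/
def Crossing [Preorder Mty] [Preorder Wty] (p q : Mty × Wty) : Prop :=
  (p.1 < q.1 ∧ q.2 < p.2) ∨ (q.1 < p.1 ∧ p.2 < q.2)

/-- A set of pairs is noncrossing if no two of its pairs cross. -/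
def Noncrossing [Preorder Mty] [Preorder Wty] (M : Finset (Mty × Wty)) : Prop :=
  ∀ p ∈ M, ∀ q ∈ M, ¬ Crossing p q

/-- `(m, w)` is a (weak) blocking pair for `M`: an acceptable pair not in `M`
such that `m` strictly prefers `w` to his partner in `M` (or is single) and
`w` strictly prefers `m` to her partner in `M` (or is single). -/
def Blocks (I : SMTI Mty Wty) (M : Finset (Mty × Wty)) (m : Mty) (w : Wty) : Prop :=
  I.Acc m w ∧ (m, w) ∉ M ∧
  (∀ w', (m, w') ∈ M → rk (I.mpref m w) < rk (I.mpref m w')) ∧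
  (∀ m', (m', w) ∈ M → rk (I.wpref w m) < rk (I.wpref w m'))

/-- A noncrossing (weak) blocking pair: a blocking pair crossing no pair of `M`. -/
def NCBlocks [Preorder Mty] [Preorder Wty] (I : SMTI Mty Wty) (M : Finset (Mty × Wty))
    (m : Mty) (w : Wty) : Prop :=
  I.Blocks M m w ∧ ∀ q ∈ M, ¬ Crossing (m, w) q

/-- A strongly stable noncrossing matching (for SMTI in the weak-stability sense:
a weak-SSNM): a noncrossing matching admitting no (weak) blocking pair at all. -/
def IsSSNM [Preorder Mty] [Preorder Wty] (I : SMTI Mty Wty) (M : Finset (Mty × Wty)) : Prop :=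
  I.IsMatching M ∧ Noncrossing M ∧ ∀ m w, ¬ I.Blocks M m w

/-- A weakly stable noncrossing matching: a noncrossing matching admitting
no noncrossing (weak) blocking pair. -/
def IsWSNM [Preorder Mty] [Preorder Wty] (I : SMTI Mty Wty) (M : Finset (Mty × Wty)) : Prop :=
  I.IsMatching M ∧ Noncrossing M ∧ ∀ m w, ¬ I.NCBlocks M m w

/-- The instance has strict preference lists (no ties), i.e. it is an SMI instance. -/
def NoTies (I : SMTI Mty Wty) : Prop :=
  (∀ m w w', (I.mpref m w).isSome → I.mpref m w = I.mpref m w' → w = w') ∧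
  (∀ w m m', (I.wpref w m).isSome → I.wpref w m = I.wpref w m' → m = m')

end SMTI

/-- The order pairing between two finite sets of men and women:
the `ℓ`-th smallest-indexed man of `A` is paired with the `ℓ`-th
smallest-indexed woman of `B`. -/
def orderPairing {n : ℕ} (A B : Finset (Fin n)) : Finset (Fin n × Fin n) :=
  ((A.sort (· ≤ ·)).zip (B.sort (· ≤ ·))).toFinset

/-!
By the rural hospitals theorem every stable matching of an SMI instance matches the same men `A`
and the same women `B`. An SSNM is a stable matching, so it matches exactly `A` and `B`; being
noncrossing, it must pair the `ℓ`-th man of `A` with the `ℓ`-th woman of `B`, because both have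
the same number of partners below them. Hence an SSNM can only be the order pairing `N`, and `N`,
which is always noncrossing, is an SSNM as soon as it is a stable matching.
-/

open Finset SMTI

namespace SMTI

variable {Mty Wty : Type}

def IsStable (I : SMTI Mty Wty) (M : Finset (Mty × Wty)) : Prop :=
  I.IsMatching M ∧ ∀ m w, ¬ I.Blocks M m w

def flip (I : SMTI Mty Wty) : SMTI Wty Mty := ⟨I.wpref, I.mpref⟩

theorem NoTies.flip {I : SMTI Mty Wty} (h : I.NoTies) : I.flip.NoTies := ⟨h.2, h.1⟩

theorem rk_injective : Function.Injective rk := by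
  rintro (_ | a) (_ | b) h <;> simp_all [rk]

theorem NoTies.rk_mpref_lt {I : SMTI Mty Wty} (hI : I.NoTies) {m : Mty} {w w' : Wty}
    (hw : (I.mpref m w).isSome) (hne : w' ≠ w) (hle : rk (I.mpref m w') ≤ rk (I.mpref m w)) :
    rk (I.mpref m w') < rk (I.mpref m w) :=
  hle.lt_of_ne fun h => hne (hI.1 m w w' hw (rk_injective h.symm)).symm

theorem NoTies.rk_wpref_lt {I : SMTI Mty Wty} (hI : I.NoTies) {w : Wty} {m m' : Mty}
    (hm : (I.wpref w m).isSome) (hne : m' ≠ m) (hle : rk (I.wpref w m') ≤ rk (I.wpref w m)) :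
    rk (I.wpref w m') < rk (I.wpref w m) :=
  hI.flip.rk_mpref_lt hm hne hle

section Flip

variable [DecidableEq Mty] [DecidableEq Wty] {I : SMTI Mty Wty} {M : Finset (Mty × Wty)}

theorem mem_image_swap {m : Mty} {w : Wty} : (w, m) ∈ M.image Prod.swap ↔ (m, w) ∈ M := by
  simp

theorem blocks_flip_iff {m : Mty} {w : Wty} :
    I.flip.Blocks (M.image Prod.swap) w m ↔ I.Blocks M m w := by
  simp only [Blocks, Acc, flip, mem_image_swap]
  tauto

theorem IsStable.flip (h : I.IsStable M) : I.flip.IsStable (M.image Prod.swap) := by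
  refine ⟨⟨?_, ?_⟩, fun w m hb => h.2 m w (blocks_flip_iff.1 hb)⟩
  · rintro ⟨w, m⟩ hp
    exact (h.1.1 (m, w) (mem_image_swap.1 hp)).symm
  · rintro ⟨w, m⟩ hp ⟨w', m'⟩ hq hor
    have := h.1.2 (m, w) (mem_image_swap.1 hp) (m', w') (mem_image_swap.1 hq) hor.symm
    simp_all

end Flip

section RuralHospitals

variable {I : SMTI Mty Wty} {M M' : Finset (Mty × Wty)}

/-- `w` must prefer her `M'`-partner `m'` to `m`, else `(m, w)` blocks `M'`; then `m'` must prefer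
his `M`-partner `w'` to `w`, else `(m', w)` blocks `M`. -/
theorem exists_next_of_prefers (hI : I.NoTies) (hM : I.IsStable M) (hM' : I.IsStable M')
    {m : Mty} {w : Wty} (hmw : (m, w) ∈ M)
    (hpref : ∀ w', (m, w') ∈ M' → rk (I.mpref m w) < rk (I.mpref m w')) :
    ∃ m' w', (m', w) ∈ M' ∧ (m', w') ∈ M ∧
      ∀ w'', (m', w'') ∈ M' → rk (I.mpref m' w') < rk (I.mpref m' w'') := by
  have hacc := hM.1.1 _ hmw
  have hnotin : (m, w) ∉ M' := fun h => (hpref w h).false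
  obtain ⟨m', hm'w, hle⟩ : ∃ m', (m', w) ∈ M' ∧ rk (I.wpref w m') ≤ rk (I.wpref w m) := by
    by_contra! h
    exact hM'.2 m w ⟨hacc, hnotin, hpref, h⟩
  have hm' : m' ≠ m := by
    rintro rfl
    exact hnotin hm'w
  have hnotin' : (m', w) ∉ M := fun h => hm' (congrArg Prod.fst (hM.1.2 _ h _ hmw (Or.inr rfl)))
  obtain ⟨w', hm'w', hle'⟩ : ∃ w', (m', w') ∈ M ∧ rk (I.mpref m' w') ≤ rk (I.mpref m' w) := by
    by_contra! h
    refine hM.2 m' w ⟨hM'.1.1 _ hm'w, hnotin', h, fun m'' hm'' => ?_⟩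
    obtain rfl : m'' = m := congrArg Prod.fst (hM.1.2 _ hm'' _ hmw (Or.inr rfl))
    exact hI.rk_wpref_lt hacc.2 hm' hle
  have hw' : w' ≠ w := by
    rintro rfl
    exact hnotin' hm'w'
  refine ⟨m', w', hm'w, hm'w', fun w'' hw'' => ?_⟩
  obtain rfl : w'' = w := congrArg Prod.snd (hM'.1.2 _ hw'' _ hm'w (Or.inl rfl))
  exact hI.rk_mpref_lt (hM'.1.1 _ hm'w).1 hw' hle'

/-- The pairs of `M` whose man prefers his `M`-partner to his `M'`-partner are mapped injectively
into themselves by `exists_next_of_prefers`, hence surjectively; a man matched in `M` but single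
in `M'` would lie in this set without being the image of anything. -/
theorem IsStable.image_fst_subset [DecidableEq Mty] (hI : I.NoTies) (hM : I.IsStable M)
    (hM' : I.IsStable M') : M.image Prod.fst ⊆ M'.image Prod.fst := by
  intro m0 hm0
  obtain ⟨⟨m0, w0⟩, h0, rfl⟩ := mem_image.1 hm0
  by_contra hsingle
  have hsingle' : ∀ w, (m0, w) ∉ M' := fun w h => hsingle (mem_image.2 ⟨_, h, rfl⟩)
  set S := M.filter fun p => ∀ w', (p.1, w') ∈ M' → rk (I.mpref p.1 p.2) < rk (I.mpref p.1 w')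
  have hnext : ∀ p ∈ S, ∃ q ∈ S, (q.1, p.2) ∈ M' := by
    rintro ⟨m, w⟩ hp
    obtain ⟨m', w', hm'w, hm'w', hpref'⟩ := exists_next_of_prefers hI hM hM' (mem_filter.1 hp).1
      (mem_filter.1 hp).2
    exact ⟨(m', w'), mem_filter.2 ⟨hm'w', hpref'⟩, hm'w⟩
  choose! f hfS hfM' using hnext
  have hinj : Set.InjOn f S := fun p hp q hq hpq =>
    hM.1.2 _ (mem_filter.1 hp).1 _ (mem_filter.1 hq).1 <| Or.inr <| (Prod.mk.inj <|
      hM'.1.2 _ (hfM' p hp) _ (hfM' q hq) (Or.inl (by rw [hpq]))).2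
  obtain ⟨p, hp, hfp⟩ := surjOn_of_injOn_of_card_le f hfS hinj le_rfl
    (mem_filter.2 ⟨h0, fun w h => absurd h (hsingle' w)⟩)
  exact hsingle' _ (hfp ▸ hfM' p hp)

theorem IsStable.image_fst_eq [DecidableEq Mty] (hI : I.NoTies) (hM : I.IsStable M)
    (hM' : I.IsStable M') : M.image Prod.fst = M'.image Prod.fst :=
  (hM.image_fst_subset hI hM').antisymm (hM'.image_fst_subset hI hM)

theorem IsStable.image_snd_eq [DecidableEq Mty] [DecidableEq Wty] (hI : I.NoTies)
    (hM : I.IsStable M) (hM' : I.IsStable M') : M.image Prod.snd = M'.image Prod.snd := by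
  have := hM.flip.image_fst_eq hI.flip hM'.flip
  simpa [image_image, Function.comp_def] using this

end RuralHospitals

end SMTI

section Noncrossing

variable {α β : Type}

def IsOneToOne (M : Finset (α × β)) : Prop :=
  ∀ p ∈ M, ∀ q ∈ M, (p.1 = q.1 ∨ p.2 = q.2) → p = q

theorem IsOneToOne.injOn_fst {M : Finset (α × β)} (h : IsOneToOne M) :
    Set.InjOn Prod.fst (M : Set (α × β)) :=
  fun p hp q hq hpq => h p hp q hq (Or.inl hpq)

theorem IsOneToOne.injOn_snd {M : Finset (α × β)} (h : IsOneToOne M) :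
    Set.InjOn Prod.snd (M : Set (α × β)) :=
  fun p hp q hq hpq => h p hp q hq (Or.inr hpq)

variable [LinearOrder α] [LinearOrder β]

theorem strictMonoOn_card_filter_lt (s : Finset α) :
    StrictMonoOn (fun a => #{x ∈ s | x < a}) s := by
  intro a ha b _ hab
  refine card_lt_card ((ssubset_iff_of_subset fun x hx => ?_).2 ⟨a, ?_, ?_⟩)
  · simp only [mem_filter] at hx ⊢
    exact ⟨hx.1, hx.2.trans hab⟩
  · simp [mem_coe.1 ha, hab]
  · simp

theorem lt_iff_lt_of_noncrossing {M : Finset (α × β)} (hinj : IsOneToOne M) (hnc : Noncrossing M)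
    {p q : α × β} (hp : p ∈ M) (hq : q ∈ M) : q.1 < p.1 ↔ q.2 < p.2 := by
  by_cases hqp : q = p
  · simp [hqp]
  have h1 : q.1 ≠ p.1 := fun h => hqp (hinj q hq p hp (Or.inl h))
  have h2 : q.2 ≠ p.2 := fun h => hqp (hinj q hq p hp (Or.inr h))
  have hcross := hnc p hp q hq
  simp only [Crossing, not_or, not_and, not_lt] at hcross
  exact ⟨fun h => (hcross.2 h).lt_of_ne h2,
    fun h => lt_of_not_ge fun h' => (hcross.1 (h'.lt_of_ne h1.symm)).not_gt h⟩

theorem card_filter_image_snd_lt {M : Finset (α × β)} (hinj : IsOneToOne M) (hnc : Noncrossing M)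
    {p : α × β} (hp : p ∈ M) :
    #{b ∈ M.image Prod.snd | b < p.2} = #{a ∈ M.image Prod.fst | a < p.1} := by
  rw [filter_image, filter_image,
    card_image_of_injOn (hinj.injOn_snd.mono (coe_subset.2 (filter_subset _ _))),
    card_image_of_injOn (hinj.injOn_fst.mono (coe_subset.2 (filter_subset _ _)))]
  exact congrArg card (filter_congr fun q hq => (lt_iff_lt_of_noncrossing hinj hnc hp hq).symm)

theorem subset_of_noncrossing_of_image_eq {M₁ M₂ : Finset (α × β)}
    (hinj₁ : IsOneToOne M₁) (hnc₁ : Noncrossing M₁) (hinj₂ : IsOneToOne M₂) (hnc₂ : Noncrossing M₂)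
    (hfst : M₁.image Prod.fst = M₂.image Prod.fst) (hsnd : M₁.image Prod.snd = M₂.image Prod.snd) :
    M₁ ⊆ M₂ := by
  intro p hp
  obtain ⟨q, hq, hqp⟩ := mem_image.1 (hfst ▸ mem_image_of_mem Prod.fst hp)
  have hrank : #{b ∈ M₂.image Prod.snd | b < q.2} = #{b ∈ M₂.image Prod.snd | b < p.2} := by
    rw [card_filter_image_snd_lt hinj₂ hnc₂ hq, ← hfst, hqp,
      ← card_filter_image_snd_lt hinj₁ hnc₁ hp, hsnd]
  have h2 : q.2 = p.2 := (strictMonoOn_card_filter_lt _).injOn (mem_image_of_mem _ hq)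
    (hsnd ▸ mem_image_of_mem _ hp) hrank
  rwa [← Prod.ext hqp h2]

theorem eq_of_noncrossing_of_image_eq {M₁ M₂ : Finset (α × β)}
    (hinj₁ : IsOneToOne M₁) (hnc₁ : Noncrossing M₁) (hinj₂ : IsOneToOne M₂) (hnc₂ : Noncrossing M₂)
    (hfst : M₁.image Prod.fst = M₂.image Prod.fst) (hsnd : M₁.image Prod.snd = M₂.image Prod.snd) :
    M₁ = M₂ :=
  (subset_of_noncrossing_of_image_eq hinj₁ hnc₁ hinj₂ hnc₂ hfst hsnd).antisymm
    (subset_of_noncrossing_of_image_eq hinj₂ hnc₂ hinj₁ hnc₁ hfst.symm hsnd.symm)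

end Noncrossing

section OrderPairing

variable {n : ℕ}

theorem mem_orderPairing {A B : Finset (Fin n)} {p : Fin n × Fin n} :
    p ∈ orderPairing A B ↔ ∃ (i : ℕ) (hA : i < (A.sort (· ≤ ·)).length)
      (hB : i < (B.sort (· ≤ ·)).length), p = ((A.sort (· ≤ ·))[i], (B.sort (· ≤ ·))[i]) := by
  rw [orderPairing, List.mem_toFinset, List.mem_iff_getElem]
  constructor
  · rintro ⟨i, hi, rfl⟩
    rw [List.length_zip, lt_min_iff] at hi
    exact ⟨i, hi.1, hi.2, List.getElem_zip⟩
  · rintro ⟨i, hA, hB, rfl⟩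
    exact ⟨i, (List.length_zip ▸ lt_min hA hB), List.getElem_zip⟩

theorem image_fst_orderPairing {A B : Finset (Fin n)} (h : #A = #B) :
    (orderPairing A B).image Prod.fst = A := by
  rw [orderPairing, List.toFinset, image_toFinset, Multiset.map_coe,
    List.map_fst_zip (by simp [h])]
  exact sort_toFinset _ _

theorem image_snd_orderPairing {A B : Finset (Fin n)} (h : #A = #B) :
    (orderPairing A B).image Prod.snd = B := by
  rw [orderPairing, List.toFinset, image_toFinset, Multiset.map_coe,
    List.map_snd_zip (by simp [h])]
  exact sort_toFinset _ _

theorem isOneToOne_orderPairing (A B : Finset (Fin n)) : IsOneToOne (orderPairing A B) := by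
  intro p hp q hq h
  obtain ⟨i, hiA, hiB, rfl⟩ := mem_orderPairing.1 hp
  obtain ⟨j, hjA, hjB, rfl⟩ := mem_orderPairing.1 hq
  obtain rfl : i = j := by
    rcases h with h | h
    · exact (A.sort_nodup _).getElem_inj_iff.1 h
    · exact (B.sort_nodup _).getElem_inj_iff.1 h
  rfl

theorem noncrossing_orderPairing (A B : Finset (Fin n)) : Noncrossing (orderPairing A B) := by
  intro p hp q hq
  obtain ⟨i, hiA, hiB, rfl⟩ := mem_orderPairing.1 hp
  obtain ⟨j, hjA, hjB, rfl⟩ := mem_orderPairing.1 hq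
  simp only [Crossing, (sortedLT_sort A).getElem_lt_getElem_iff,
    (sortedLT_sort B).getElem_lt_getElem_iff]
  omega

end OrderPairing

/-- given any stable matching `M0` of an SMI instance `I`, with `N` the
order pairing between the matched men and the matched women of `M0`, the instance
admits an SSNM iff every pair of `N` is acceptable and `N` is a stable matching of `I`;
and in that case `N` is the unique SSNM of `I`. -/
theorem stmt2 {n : ℕ} (I : SMTI (Fin n) (Fin n)) (hI : I.NoTies)
    (M0 : Finset (Fin n × Fin n)) (hM0 : I.IsMatching M0)
    (hstable : ∀ m w, ¬ I.Blocks M0 m w)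
    (N : Finset (Fin n × Fin n))
    (hN : N = orderPairing (M0.image Prod.fst) (M0.image Prod.snd)) :
    ((∃ M, I.IsSSNM M) ↔ (I.IsMatching N ∧ ∀ m w, ¬ I.Blocks N m w)) ∧
    ((I.IsMatching N ∧ ∀ m w, ¬ I.Blocks N m w) → ∀ M, (I.IsSSNM M ↔ M = N)) := by
  have hcard : #(M0.image Prod.fst) = #(M0.image Prod.snd) := by
    rw [card_image_of_injOn (IsOneToOne.injOn_fst hM0.2),
      card_image_of_injOn (IsOneToOne.injOn_snd hM0.2)]
  have hNnc : Noncrossing N := hN ▸ noncrossing_orderPairing _ _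
  have ssnm_eq : ∀ M, I.IsSSNM M → M = N := by
    rintro M ⟨hMm, hMnc, hMs⟩
    have hM : I.IsStable M := ⟨hMm, hMs⟩
    subst hN
    exact eq_of_noncrossing_of_image_eq hMm.2 hMnc (isOneToOne_orderPairing _ _)
      (noncrossing_orderPairing _ _)
      ((hM.image_fst_eq hI ⟨hM0, hstable⟩).trans (image_fst_orderPairing hcard).symm)
      ((hM.image_snd_eq hI ⟨hM0, hstable⟩).trans (image_snd_orderPairing hcard).symm)
  refine ⟨⟨fun ⟨M, hM⟩ => ssnm_eq M hM ▸ ⟨hM.1, hM.2.2⟩, fun hNst => ⟨N, hNst.1, hNnc, hNst.2⟩⟩,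
    fun hNst M => ⟨ssnm_eq M, ?_⟩⟩
  rintro rfl
  exact ⟨hNst.1, hNnc, hNst.2⟩
end

section
/- Let I be an SMTI instance with men m_1, …, m_n and women w_1, …, w_n (placed top to bottom in index order) in which each man's preference list contains at most one woman, let E_I be the set of acceptable pairs (m, w) with m a first choice of w, and let M* be a weak-SSNM of I. Suppose the greedy procedure (processing women w_1, …, w_n in order, assigning each woman with nonempty list the smallest-indexed man m_j with (m_j, w_i) ∈ E_I such that the current set remains a noncrossing matching) has successfully processed women w_1, …, w_{k−1}, producing the partial matching M̄. Then for each i with 1 ≤ i ≤ k − 1: w_i is single in M* if and only if w_i is single in M̄, and if M*(w_i) = m_p and M̄(w_i) = m_q then q ≤ p. -/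
/-!
If the greedy procedure gives `w_i` the man `q`, then `q` is a first choice of `w_i`. As `w_i` is
the only woman on `q`'s list, `q` is single in `M*` unless matched to `w_i`, so stability of `M*`
forces `w_i` to be matched in `M*` to a man `p` she ranks at least as high as `q`: a first choice
too. By induction on `i`, every greedy pair `(r, w)` with `w` above `w_i` satisfies
`r ≤ M*(w) < p`, the last step by noncrossing of `M*`. Hence adding `(p, w_i)` to the greedy
matching built before step `i` keeps it a noncrossing matching, `p` was a candidate at that step,
and `q ≤ p` by the minimality of the greedy choice.
-/

open scoped Classical

/-- `m` is a first choice of `w`: `(m, w)` is acceptable and `w` weakly prefers `m`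
to every man on her list.  `E_I` is the set of pairs satisfying this. -/
def FirstChoice {Mty Wty : Type} (I : SMTI Mty Wty) (m : Mty) (w : Wty) : Prop :=
  I.Acc m w ∧ ∀ m', (I.wpref w m').isSome → SMTI.rk (I.wpref w m) ≤ SMTI.rk (I.wpref w m')

/-- One step of the greedy procedure: process woman `i`.  If her list is nonempty,
add `(m_{j*}, w_i)` for the smallest `j` with `(m_j, w_i) ∈ E_I` such that the current
set stays a noncrossing matching; fail (`none`) if no such `j` exists. -/
noncomputable def greedyStep {n : ℕ} (I : SMTI (Fin n) (Fin n))
    (M : Finset (Fin n × Fin n)) (i : Fin n) : Option (Finset (Fin n × Fin n)) :=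
  if ∃ m, (I.wpref i m).isSome then
    if hF : (Finset.univ.filter (fun j : Fin n =>
        FirstChoice I j i ∧ I.IsMatching (insert (j, i) M) ∧
          SMTI.Noncrossing (insert (j, i) M))).Nonempty
    then some (insert ((Finset.univ.filter (fun j : Fin n =>
        FirstChoice I j i ∧ I.IsMatching (insert (j, i) M) ∧
          SMTI.Noncrossing (insert (j, i) M))).min' hF, i) M)
    else none
  else some M

/-- The greedy procedure run on the first `k` women (in top-to-bottom order),
starting from the empty matching; `none` means it failed. -/
noncomputable def greedyUpTo {n : ℕ} (I : SMTI (Fin n) (Fin n)) (k : ℕ) :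
    Option (Finset (Fin n × Fin n)) :=
  ((List.finRange n).take k).foldl (fun acc i => acc.bind fun M => greedyStep I M i) (some ∅)

/-- The full greedy procedure, processing all `n` women. -/
noncomputable def greedyRun {n : ℕ} (I : SMTI (Fin n) (Fin n)) :
    Option (Finset (Fin n × Fin n)) :=
  greedyUpTo I n

namespace SMTI

variable {Mty Wty : Type} {I : SMTI Mty Wty} {M : Finset (Mty × Wty)}

theorem IsMatching.fst_eq (hM : I.IsMatching M) {m m' : Mty} {w : Wty}
    (h : (m, w) ∈ M) (h' : (m', w) ∈ M) : m = m' :=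
  congrArg Prod.fst (hM.2 _ h _ h' (Or.inr rfl))

theorem IsMatching.insert [DecidableEq Mty] [DecidableEq Wty] (hM : I.IsMatching M)
    {m : Mty} {w : Wty} (hacc : I.Acc m w)
    (hfresh : ∀ r ∈ M, r.1 ≠ m ∧ r.2 ≠ w) : I.IsMatching (insert (m, w) M) := by
  refine ⟨?_, ?_⟩
  · intro r hr
    rcases Finset.mem_insert.mp hr with rfl | hr
    exacts [hacc, hM.1 r hr]
  · rintro r hr s hs hrs
    rcases Finset.mem_insert.mp hr with rfl | hr <;> rcases Finset.mem_insert.mp hs with rfl | hs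
    · rfl
    · have := hfresh s hs; grind
    · have := hfresh r hr; grind
    · exact hM.2 r hr s hs hrs

theorem Noncrossing.insert [Preorder Mty] [Preorder Wty] [DecidableEq Mty] [DecidableEq Wty]
    (hM : Noncrossing M) {m : Mty} {w : Wty}
    (hbelow : ∀ r ∈ M, r.1 < m ∧ r.2 < w) : Noncrossing (insert (m, w) M) := by
  have hnew : ∀ r ∈ M, ¬ Crossing (m, w) r := by
    rintro r hr (⟨h, -⟩ | ⟨-, h⟩)
    · exact lt_asymm h (hbelow r hr).1
    · exact lt_asymm h (hbelow r hr).2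
  rintro r hr s hs
  rcases Finset.mem_insert.mp hr with rfl | hr <;> rcases Finset.mem_insert.mp hs with rfl | hs
  · rintro (⟨h, -⟩ | ⟨h, -⟩) <;> exact lt_irrefl _ h
  · exact hnew s hs
  · exact fun h => hnew r hr h.symm
  · exact hM r hr s hs

theorem Noncrossing.fst_lt_of_snd_lt [LinearOrder Mty] [Preorder Wty] (hM : Noncrossing M)
    {a c : Mty} {b d : Wty} (h : (a, b) ∈ M) (h' : (c, d) ∈ M) (hbd : b < d) (hac : a ≠ c) :
    a < c :=
  lt_of_le_of_ne (not_lt.mp fun hca => hM _ h' _ h (Or.inl ⟨hca, hbd⟩)) hac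

theorem exists_partner_rk_le_of_not_blocks
    (hone : ∀ m w w', (I.mpref m w).isSome → (I.mpref m w').isSome → w = w')
    (hM : I.IsMatching M) (hstable : ∀ m w, ¬ I.Blocks M m w) {q : Mty} {w : Wty}
    (hq : I.Acc q w) : ∃ p, (p, w) ∈ M ∧ rk (I.wpref w p) ≤ rk (I.wpref w q) := by
  by_cases hqw : (q, w) ∈ M
  · exact ⟨q, hqw, le_rfl⟩
  by_contra! hworse
  refine hstable q w ⟨hq, hqw, fun w' hqw' => ?_, hworse⟩
  obtain rfl : w' = w := hone q w' w (hM.1 _ hqw').1 hq.1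
  exact absurd hqw' hqw

end SMTI

section Greedy

variable {n : ℕ} {I : SMTI (Fin n) (Fin n)}

def IsGreedyCandidate (I : SMTI (Fin n) (Fin n)) (M : Finset (Fin n × Fin n)) (i j : Fin n) :
    Prop :=
  FirstChoice I j i ∧ I.IsMatching (insert (j, i) M) ∧ SMTI.Noncrossing (insert (j, i) M)

theorem greedyStep_eq_some {M M' : Finset (Fin n × Fin n)} {i : Fin n}
    (h : greedyStep I M i = some M') :
    (M' = M ∧ ∀ m, ¬ I.Acc m i) ∨
      ∃ q, IsGreedyCandidate I M i q ∧ (∀ j, IsGreedyCandidate I M i j → q ≤ j) ∧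
        M' = insert (q, i) M := by
  unfold greedyStep at h
  split_ifs at h with hlist hF
  · refine Or.inr ⟨_, (Finset.mem_filter.mp (Finset.min'_mem _ hF)).2,
      fun j hj => Finset.min'_le _ j
        (by simpa only [Finset.mem_filter, Finset.mem_univ, true_and]),
      (Option.some.inj h).symm⟩
  · exact Or.inl ⟨(Option.some.inj h).symm, fun m hm => hlist ⟨m, hm.2⟩⟩

theorem greedyUpTo_succ (t : ℕ) :
    greedyUpTo I (t + 1) =
      if h : t < n then (greedyUpTo I t).bind (greedyStep I · ⟨t, h⟩) else greedyUpTo I t := by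
  have hnone : ∀ l : List (Fin n),
      l.foldl (fun acc i => acc.bind fun M => greedyStep I M i) none = none := by
    intro l; induction l <;> simp_all
  unfold greedyUpTo
  split_ifs with ht
  · have hget : (List.finRange n)[t]? = some ⟨t, ht⟩ := by simp [ht]
    rw [List.take_add_one, List.foldl_append, hget]
    cases ((List.finRange n).take t).foldl
      (fun acc i => acc.bind fun M => greedyStep I M i) (some ∅) <;> simp [hnone]
  · rw [List.take_of_length_le (by simp; omega), List.take_of_length_le (by simp; omega)]

theorem greedyUpTo_spec {t : ℕ} {M : Finset (Fin n × Fin n)} (h : greedyUpTo I t = some M) :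
    I.IsMatching M ∧ SMTI.Noncrossing M ∧ ∀ r ∈ M, (r.2 : ℕ) < t := by
  induction t generalizing M with
  | zero =>
    obtain rfl : M = ∅ := (Option.some.inj h).symm
    exact ⟨⟨by simp, by simp⟩, by simp [SMTI.Noncrossing], by simp⟩
  | succ t ih =>
    rw [greedyUpTo_succ] at h
    split_ifs at h with ht
    · obtain ⟨M0, hM0, hstep⟩ := Option.bind_eq_some_iff.mp h
      obtain ⟨hmatch, hnc, hlt⟩ := ih hM0
      rcases greedyStep_eq_some hstep with ⟨rfl, -⟩ | ⟨q, ⟨-, hmatch', hnc'⟩, -, rfl⟩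
      · exact ⟨hmatch, hnc, fun r hr => (hlt r hr).trans (Nat.lt_succ_self t)⟩
      · refine ⟨hmatch', hnc', fun r hr => ?_⟩
        rcases Finset.mem_insert.mp hr with rfl | hr
        exacts [Nat.lt_succ_self t, (hlt r hr).trans (Nat.lt_succ_self t)]
    · obtain ⟨hmatch, hnc, hlt⟩ := ih h
      exact ⟨hmatch, hnc, fun r hr => (hlt r hr).trans (Nat.lt_succ_self t)⟩

theorem greedyUpTo_mono {t t' : ℕ} (hle : t ≤ t') {M' : Finset (Fin n × Fin n)}
    (h : greedyUpTo I t' = some M') : ∃ M, greedyUpTo I t = some M ∧ M ⊆ M' := by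
  induction t', hle using Nat.le_induction generalizing M' with
  | base => exact ⟨M', h, subset_rfl⟩
  | succ t' _ ih =>
    rw [greedyUpTo_succ] at h
    split_ifs at h
    · obtain ⟨M0, hM0, hstep⟩ := Option.bind_eq_some_iff.mp h
      obtain ⟨M, hM, hsub⟩ := ih hM0
      refine ⟨M, hM, hsub.trans ?_⟩
      rcases greedyStep_eq_some hstep with ⟨rfl, -⟩ | ⟨q, -, -, rfl⟩
      exacts [subset_rfl, Finset.subset_insert _ _]
    · exact ih h

theorem greedyUpTo_step_of_lt {t : ℕ} {M : Finset (Fin n × Fin n)} {i : Fin n}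
    (h : greedyUpTo I t = some M) (hi : (i : ℕ) < t) :
    ∃ M0 M1, greedyUpTo I i = some M0 ∧ greedyStep I M0 i = some M1 ∧ M1 ⊆ M := by
  obtain ⟨M1, hM1, hsub⟩ := greedyUpTo_mono (Nat.succ_le_of_lt hi) h
  rw [greedyUpTo_succ, dif_pos i.isLt, Fin.eta] at hM1
  obtain ⟨M0, hM0, hstep⟩ := Option.bind_eq_some_iff.mp hM1
  exact ⟨M0, M1, hM0, hstep, hsub⟩

theorem greedyUpTo_exists_partner {t : ℕ} {M : Finset (Fin n × Fin n)} {i m : Fin n}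
    (h : greedyUpTo I t = some M) (hi : (i : ℕ) < t) (hacc : I.Acc m i) :
    ∃ q, (q, i) ∈ M := by
  obtain ⟨M0, M1, -, hstep, hsub⟩ := greedyUpTo_step_of_lt h hi
  rcases greedyStep_eq_some hstep with ⟨-, hnone⟩ | ⟨q, -, -, rfl⟩
  · exact absurd hacc (hnone m)
  · exact ⟨q, hsub (Finset.mem_insert_self _ _)⟩

theorem greedyUpTo_pick {t : ℕ} {M : Finset (Fin n × Fin n)} {q i : Fin n}
    (h : greedyUpTo I t = some M) (hqi : (q, i) ∈ M) :
    ∃ M0, greedyUpTo I i = some M0 ∧ M0 ⊆ M ∧ IsGreedyCandidate I M0 i q ∧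
      ∀ j, IsGreedyCandidate I M0 i j → q ≤ j := by
  obtain ⟨hmatch, -, hlt⟩ := greedyUpTo_spec h
  obtain ⟨M0, M1, hM0, hstep, hsub⟩ := greedyUpTo_step_of_lt h (hlt _ hqi)
  rcases greedyStep_eq_some hstep with ⟨-, hnone⟩ | ⟨q', hq', hmin, rfl⟩
  · exact absurd (hmatch.1 _ hqi) (hnone q)
  · obtain rfl : q' = q := hmatch.fst_eq (hsub (Finset.mem_insert_self _ _)) hqi
    exact ⟨M0, hM0, (Finset.subset_insert _ _).trans hsub, hq', hmin⟩

theorem greedyUpTo_le_of_isSSNM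
    (hone : ∀ m w w', (I.mpref m w).isSome → (I.mpref m w').isSome → w = w')
    {Mstar : Finset (Fin n × Fin n)} (hMstar : I.IsSSNM Mstar)
    {t : ℕ} {M : Finset (Fin n × Fin n)} (h : greedyUpTo I t = some M) {q i : Fin n}
    (hqi : (q, i) ∈ M) : ∃ p, (p, i) ∈ Mstar ∧ q ≤ p := by
  obtain ⟨hmatch, hnc, hstable⟩ := hMstar
  induction i using WellFoundedLT.induction generalizing q with
  | ind i ih =>
  obtain ⟨M0, hM0, hsub, ⟨hfirst, -⟩, hmin⟩ := greedyUpTo_pick h hqi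
  obtain ⟨hmatch0, hnc0, hlt0⟩ := greedyUpTo_spec hM0
  obtain ⟨p, hp, hrank⟩ :=
    SMTI.exists_partner_rk_le_of_not_blocks hone hmatch hstable hfirst.1
  have hpfirst : FirstChoice I p i :=
    ⟨hmatch.1 _ hp, fun m hm => hrank.trans (hfirst.2 m hm)⟩
  have hbelow : ∀ r ∈ M0, r.1 < p ∧ r.2 < i := by
    rintro ⟨r, w⟩ hr
    have hwi : w < i := hlt0 _ hr
    obtain ⟨s, hs, hrs⟩ := ih w hwi (hsub hr)
    have hsp : s ≠ p := fun hsp =>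
      hwi.ne (congrArg Prod.snd (hmatch.2 _ hs _ hp (Or.inl hsp)))
    exact ⟨hrs.trans_lt (hnc.fst_lt_of_snd_lt hs hp hwi hsp), hwi⟩
  refine ⟨p, hp, hmin p ⟨hpfirst, ?_, hnc0.insert hbelow⟩⟩
  exact hmatch0.insert hpfirst.1
    fun r hr => ⟨(hbelow r hr).1.ne, (hbelow r hr).2.ne⟩

end Greedy

/-- let `M*` be a weak-SSNM of an SMTI instance in which each man's list
has at most one woman, and suppose the greedy procedure has successfully processed the
first `k − 1` women, producing `M̄`.  Then for each of these women `w_i`: she is single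
in `M*` iff she is single in `M̄`, and if `M*(w_i) = m_p` and `M̄(w_i) = m_q` then `q ≤ p`. -/
theorem stmt8 {n : ℕ} (I : SMTI (Fin n) (Fin n))
    (hone : ∀ m w w', (I.mpref m w).isSome → (I.mpref m w').isSome → w = w')
    (Mstar : Finset (Fin n × Fin n)) (hMstar : I.IsSSNM Mstar)
    (k : ℕ) (Mbar : Finset (Fin n × Fin n))
    (hbar : greedyUpTo I (k - 1) = some Mbar) :
    ∀ i : Fin n, (i : ℕ) < k - 1 →
      ((∃ m, (m, i) ∈ Mstar) ↔ (∃ m, (m, i) ∈ Mbar)) ∧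
      (∀ p q : Fin n, (p, i) ∈ Mstar → (q, i) ∈ Mbar → q ≤ p) := by
  intro i hi
  have hle := fun q (hq : (q, i) ∈ Mbar) => greedyUpTo_le_of_isSSNM hone hMstar hbar hq
  refine ⟨⟨fun ⟨m, hm⟩ => greedyUpTo_exists_partner hbar hi (hMstar.1.1 _ hm),
    fun ⟨q, hq⟩ => (hle q hq).imp fun _ => And.left⟩, fun p q hp hq => ?_⟩
  obtain ⟨p', hp', hqp'⟩ := hle q hq
  rwa [hMstar.1.fst_eq hp hp']
end

section
/- Let I be the padded instance of an SMI instance I'. Then every semi-WSNM of I contains the pair (m_0, w_0). -/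
/-!
If `(m₀, w₀)` were missing from a semi-WSNM `M`, then `m₀` and `w₀`, who list only each other,
would both be single, so `(m₀, w₀)` would block `M`; lying at the top of both lines it crosses
nothing. Every noncrossing blocking pair lies weakly below the maximum pair, which therefore
is `(m₀, w₀)` itself, a pair of `M`.
-/

open scoped Classical

namespace SMTI

variable {Mty Wty : Type}

/-- `opt I`: the maximum cardinality of a WSNM of `I`. -/
noncomputable def opt [Preorder Mty] [Preorder Wty] (I : SMTI Mty Wty) : ℕ :=
  sSup {k | ∃ M, I.IsWSNM M ∧ M.card = k}

/-- `p` is the maximum pair of `M`:  it belongs to `M` and dominates every pair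
of `M` in both coordinates. -/
def IsMaxPair [Preorder Mty] [Preorder Wty] (M : Finset (Mty × Wty)) (p : Mty × Wty) : Prop :=
  p ∈ M ∧ ∀ q ∈ M, q.1 ≤ p.1 ∧ q.2 ≤ p.2

/-- `M` is a semi-WSNM with maximum pair `p`: a noncrossing matching whose maximum
pair is `p` and all of whose noncrossing blocking pairs lie (weakly) beyond `p` in
both coordinates. -/
def IsSemiWSNMWith [Preorder Mty] [Preorder Wty] (I : SMTI Mty Wty)
    (M : Finset (Mty × Wty)) (p : Mty × Wty) : Prop :=
  I.IsMatching M ∧ Noncrossing M ∧ IsMaxPair M p ∧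
    ∀ m w, I.NCBlocks M m w → p.1 ≤ m ∧ p.2 ≤ w

/-- `M` is a semi-WSNM (with some maximum pair). -/
def IsSemiWSNM [Preorder Mty] [Preorder Wty] (I : SMTI Mty Wty)
    (M : Finset (Mty × Wty)) : Prop :=
  ∃ p, I.IsSemiWSNMWith M p

/-- The padded instance: new man `m₀` and woman `w₀` on top, new man `m_{n+1}` and
woman `w_{n+1}` at the bottom; `m₀` and `w₀` list only each other, and so do
`m_{n+1}` and `w_{n+1}`; all other lists are as in the original instance
(original person `i`, `1 ≤ i ≤ n`, becomes index `i` of `Fin (n+2)`). -/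
def padded {n : ℕ} (I : SMTI (Fin n) (Fin n)) : SMTI (Fin (n + 2)) (Fin (n + 2)) where
  mpref m w :=
    if hm : 0 < m.val ∧ m.val < n + 1 then
      if hw : 0 < w.val ∧ w.val < n + 1 then
        I.mpref ⟨m.val - 1, by omega⟩ ⟨w.val - 1, by omega⟩
      else none
    else if (m.val = 0 ∧ w.val = 0) ∨ (m.val = n + 1 ∧ w.val = n + 1) then some 0
    else none
  wpref w m :=
    if hw : 0 < w.val ∧ w.val < n + 1 then
      if hm : 0 < m.val ∧ m.val < n + 1 then
        I.wpref ⟨w.val - 1, by omega⟩ ⟨m.val - 1, by omega⟩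
      else none
    else if (m.val = 0 ∧ w.val = 0) ∨ (m.val = n + 1 ∧ w.val = n + 1) then some 0
    else none

/-- The embedding of a pair of the original instance into the padded instance. -/
def emb {n : ℕ} (p : Fin n × Fin n) : Fin (n + 2) × Fin (n + 2) :=
  (⟨p.1.val + 1, by omega⟩, ⟨p.2.val + 1, by omega⟩)

/-- Pairs `p` and `q` (with `p.1 < q.1` and `p.2 < q.2`) are conflicting if the
matching `{p, q}` admits a blocking pair lying between them in both coordinates. -/
def Conflicting {nm nw : ℕ} (I : SMTI (Fin nm) (Fin nw)) (p q : Fin nm × Fin nw) : Prop :=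
  ∃ s t, I.Blocks {p, q} s t ∧ p.1 ≤ s ∧ s ≤ q.1 ∧ p.2 ≤ t ∧ t ≤ q.2

/-- `X I i j`: the maximum size of a semi-WSNM of `I` with maximum pair `(m_i, w_j)`,
or `⊥` (i.e. `−∞`) if none exists. -/
noncomputable def X {nm nw : ℕ} (I : SMTI (Fin nm) (Fin nw)) (i : Fin nm) (j : Fin nw) :
    WithBot ℕ :=
  if ∃ M, I.IsSemiWSNMWith M (i, j) then
    ((sSup {k | ∃ M, I.IsSemiWSNMWith M (i, j) ∧ M.card = k} : ℕ) : WithBot ℕ)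
  else ⊥

end SMTI

namespace SMTI

variable {Mty Wty : Type}

def IsIsolatedPair (I : SMTI Mty Wty) (m : Mty) (w : Wty) : Prop :=
  I.Acc m w ∧ (∀ w', I.Acc m w' → w' = w) ∧ ∀ m', I.Acc m' w → m' = m

theorem IsIsolatedPair.blocks {I : SMTI Mty Wty} {m : Mty} {w : Wty} {M : Finset (Mty × Wty)}
    (hmw : I.IsIsolatedPair m w) (hM : I.IsMatching M) (hnot : (m, w) ∉ M) : I.Blocks M m w := by
  obtain ⟨hacc, honly_w, honly_m⟩ := hmw
  refine ⟨hacc, hnot, fun w' hw' => ?_, fun m' hm' => ?_⟩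
  · obtain rfl := honly_w w' (hM.1 _ hw')
    exact absurd hw' hnot
  · obtain rfl := honly_m m' (hM.1 _ hm')
    exact absurd hm' hnot

theorem not_crossing_of_isMin [Preorder Mty] [Preorder Wty] {m : Mty} {w : Wty}
    (hm : IsMin m) (hw : IsMin w) (q : Mty × Wty) : ¬ Crossing (m, w) q := by
  rintro (⟨-, hq⟩ | ⟨hq, -⟩)
  · exact hw.not_lt hq
  · exact hm.not_lt hq

theorem IsSemiWSNMWith.mem_of_isIsolatedPair_of_isMin [PartialOrder Mty] [PartialOrder Wty]
    {I : SMTI Mty Wty} {M : Finset (Mty × Wty)} {p : Mty × Wty} {m : Mty} {w : Wty}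
    (hM : I.IsSemiWSNMWith M p) (hmw : I.IsIsolatedPair m w) (hm : IsMin m) (hw : IsMin w) :
    (m, w) ∈ M := by
  obtain ⟨hmatch, -, ⟨hpM, -⟩, hbeyond⟩ := hM
  by_contra hnot
  obtain ⟨hp₁, hp₂⟩ :=
    hbeyond m w ⟨hmw.blocks hmatch hnot, fun q _ => not_crossing_of_isMin hm hw q⟩
  rw [← Prod.mk.eta (p := p), hm.eq_of_le hp₁, hw.eq_of_le hp₂] at hpM
  exact hnot hpM

theorem padded_isIsolatedPair_zero {n : ℕ} (I : SMTI (Fin n) (Fin n)) :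
    (padded I).IsIsolatedPair 0 0 :=
  ⟨⟨by simp [padded], by simp [padded]⟩, fun _ hw => by simpa [padded] using hw.1,
    fun _ hm => by simpa [padded] using hm.2⟩

end SMTI

theorem stmt10_general {n : ℕ} (I' : SMTI (Fin n) (Fin n))
    (M : Finset (Fin (n + 2) × Fin (n + 2))) (h : (SMTI.padded I').IsSemiWSNM M) :
    ((0 : Fin (n + 2)), (0 : Fin (n + 2))) ∈ M := by
  obtain ⟨p, hp⟩ := h
  exact hp.mem_of_isIsolatedPair_of_isMin (SMTI.padded_isIsolatedPair_zero I')
    isMin_bot isMin_bot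

/-- every semi-WSNM of the padded instance contains `(m₀, w₀)`. -/
theorem stmt10 {n : ℕ} (I' : SMTI (Fin n) (Fin n)) (hI' : I'.NoTies)
    (M : Finset (Fin (n + 2) × Fin (n + 2))) (h : (SMTI.padded I').IsSemiWSNM M) :
    ((0 : Fin (n + 2)), (0 : Fin (n + 2))) ∈ M :=
  stmt10_general I' M h
end

section
/- Let I be the padded instance of an SMI instance I'. A matching M of I is a WSNM of I if and only if M is a semi-WSNM of I with maximum pair (m_{n+1}, w_{n+1}); consequently opt(I) = X(n+1, n+1). -/
open scoped Classical

/-! The pair `(m_{n+1}, w_{n+1})` of the padded instance lies below every other pair and its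
members accept only each other, so it belongs to every WSNM, and a semi-WSNM with this maximum
pair could only be blocked by that pair itself. Hence the two notions coincide, and
`opt I = X(n+1, n+1)` comes down to the existence of a WSNM.

Existence follows from a blocking-pair satisfaction process: repeatedly satisfy the
noncrossing blocking pair `(s, t)` with topmost man `s` and, among those, `s`'s favourite `t`.
`BlockingInvariant` is preserved and forces `t`'s old partner to lie above `s` and `s`'s old
partner to lie below `t`; so `t` improves while only women below `t` get worse, and the
vector of women's ranks decreases lexicographically. -/

namespace SMTI

variable {Mty Wty : Type}

lemma rk_lt_top {o : Option ℕ} (h : o.isSome) : rk o < ⊤ := by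
  obtain ⟨r, rfl⟩ := Option.isSome_iff_exists.1 h
  exact WithTop.coe_lt_top r

section Satisfaction

variable {I : SMTI Mty Wty} {M : Finset (Mty × Wty)} {s : Mty} {t : Wty}

noncomputable def satisfy (M : Finset (Mty × Wty)) (s : Mty) (t : Wty) : Finset (Mty × Wty) :=
  insert (s, t) (M.filter fun p => p.1 ≠ s ∧ p.2 ≠ t)

lemma mem_satisfy {p : Mty × Wty} :
    p ∈ satisfy M s t ↔ p = (s, t) ∨ p ∈ M ∧ p.1 ≠ s ∧ p.2 ≠ t := by
  simp [satisfy]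

lemma mk_mem_satisfy {a : Mty} {b : Wty} :
    (a, b) ∈ satisfy M s t ↔ a = s ∧ b = t ∨ (a, b) ∈ M ∧ a ≠ s ∧ b ≠ t := by
  simp [mem_satisfy]

lemma self_mem_satisfy : (s, t) ∈ satisfy M s t :=
  mem_satisfy.2 (Or.inl rfl)

lemma IsMatching.satisfy (hM : I.IsMatching M) (hst : I.Acc s t) :
    I.IsMatching (satisfy M s t) := by
  refine ⟨fun p hp => ?_, fun p hp q hq hpq => ?_⟩
  · rcases mem_satisfy.1 hp with rfl | ⟨hp, -⟩
    exacts [hst, hM.1 p hp]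
  · rcases mem_satisfy.1 hp with rfl | ⟨hp, hp1, hp2⟩ <;>
      rcases mem_satisfy.1 hq with rfl | ⟨hq, hq1, hq2⟩
    · rfl
    · exact (hpq.elim (hq1 ·.symm) (hq2 ·.symm)).elim
    · exact (hpq.elim hp1 hp2).elim
    · exact hM.2 p hp q hq hpq

/-- The empty infimum makes this `⊤` when `w` is single in `M`. -/
noncomputable def womanRank (I : SMTI Mty Wty) (M : Finset (Mty × Wty)) (w : Wty) : ℕ∞ :=
  (M.filter (·.2 = w)).inf fun p => rk (I.wpref w p.1)

lemma womanRank_satisfy_lt [LinearOrder Wty] (hacc : I.Acc s t)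
    (hw : ∀ a, (a, t) ∈ M → rk (I.wpref t s) < rk (I.wpref t a))
    (hs : ∀ b, (s, b) ∈ M → t < b) :
    toLex (womanRank I (satisfy M s t)) < toLex (womanRank I M) := by
  refine ⟨t, fun j (hj : j < t) => ?_, ?_⟩
  · change womanRank I (satisfy M s t) j = womanRank I M j
    unfold womanRank
    congr 1
    ext ⟨x, y⟩
    simp only [Finset.mem_filter, mk_mem_satisfy]
    constructor
    · rintro ⟨⟨-, rfl⟩ | ⟨h, -, -⟩, rfl⟩
      exacts [(lt_irrefl _ hj).elim, ⟨h, rfl⟩]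
    · rintro ⟨h, rfl⟩
      exact ⟨Or.inr ⟨h, fun hx => (hs y (hx ▸ h)).not_gt hj, hj.ne⟩, rfl⟩
  · change womanRank I (satisfy M s t) t < womanRank I M t
    have hle : womanRank I (satisfy M s t) t ≤ rk (I.wpref t s) :=
      Finset.inf_le (b := (s, t)) (by simp [self_mem_satisfy])
    refine hle.trans_lt ((Finset.lt_inf_iff (rk_lt_top hacc.2)).2 fun ⟨a, b⟩ hab => ?_)
    simp only [Finset.mem_filter] at hab
    obtain ⟨habM, rfl⟩ := hab
    exact hw a habM

end Satisfaction

section Preorder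

variable [Preorder Mty] [Preorder Wty] {M : Finset (Mty × Wty)} {s : Mty} {t : Wty}

lemma crossing_comm {p q : Mty × Wty} : Crossing p q ↔ Crossing q p := by
  unfold Crossing
  tauto

lemma Noncrossing.satisfy (hM : Noncrossing M) (hst : ∀ q ∈ M, ¬ Crossing (s, t) q) :
    Noncrossing (satisfy M s t) := by
  intro p hp q hq
  rcases mem_satisfy.1 hp with rfl | ⟨hp, -⟩ <;> rcases mem_satisfy.1 hq with rfl | ⟨hq, -⟩
  · rintro (⟨h, -⟩ | ⟨h, -⟩) <;> exact lt_irrefl _ h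
  · exact hst q hq
  · exact fun h => hst p hp (crossing_comm.1 h)
  · exact hM p hp q hq

def HasOutwardPartner (M : Finset (Mty × Wty)) (u : Mty) (v : Wty) : Prop :=
  (∃ a, (a, v) ∈ M ∧ u < a) ∨ ∃ b, (u, b) ∈ M ∧ b < v

def CrossedFromBelow (M : Finset (Mty × Wty)) (u : Mty) (v : Wty) : Prop :=
  ∃ p ∈ M, u < p.1 ∧ p.2 < v

def BlockingInvariant (I : SMTI Mty Wty) (M : Finset (Mty × Wty)) : Prop :=
  ∀ u v, I.Blocks M u v → HasOutwardPartner M u v → CrossedFromBelow M u v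

end Preorder

section LinearOrder

variable [LinearOrder Mty] [LinearOrder Wty] {I : SMTI Mty Wty} {M : Finset (Mty × Wty)}
  {s u : Mty} {t v : Wty}

lemma BlockingInvariant.partner_lt (hinv : I.BlockingInvariant M) (hst : I.NCBlocks M s t)
    {a : Mty} (ha : (a, t) ∈ M) : a < s := by
  by_contra! h
  rcases h.lt_or_eq with h | rfl
  · obtain ⟨p, hp, h1, h2⟩ := hinv s t hst.1 (Or.inl ⟨a, ha, h⟩)
    exact hst.2 p hp (Or.inl ⟨h1, h2⟩)
  · exact hst.1.2.1 ha

lemma BlockingInvariant.lt_partner (hinv : I.BlockingInvariant M) (hst : I.NCBlocks M s t)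
    {b : Wty} (hb : (s, b) ∈ M) : t < b := by
  by_contra! h
  rcases h.lt_or_eq with h | rfl
  · obtain ⟨p, hp, h1, h2⟩ := hinv s t hst.1 (Or.inr ⟨b, hb, h⟩)
    exact hst.2 p hp (Or.inl ⟨h1, h2⟩)
  · exact hst.1.2.1 hb

lemma BlockingInvariant.crossedFromBelow_satisfy_of_snd_eq (hinv : I.BlockingInvariant M)
    (hst : I.NCBlocks M s t) (htopmost : ∀ u v, I.NCBlocks M u v → s ≤ u) (hus : u ≠ s)
    (hblk : I.Blocks (satisfy M s t) u t) (hout : HasOutwardPartner (satisfy M s t) u t) :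
    CrossedFromBelow (satisfy M s t) u t := by
  obtain ⟨hacc, hnotin, hmc, hwc⟩ := hblk
  have hpref : rk (I.wpref t u) < rk (I.wpref t s) := hwc s self_mem_satisfy
  have hutM : (u, t) ∉ M := fun h => (hst.1.2.2.2 u h).not_gt hpref
  have hblkM : I.Blocks M u t := by
    refine ⟨hacc, hutM, fun b hb => hmc b ?_, fun a ha => hpref.trans (hst.1.2.2.2 a ha)⟩
    exact mk_mem_satisfy.2 (Or.inr ⟨hb, hus, fun h => hutM (h ▸ hb)⟩)
  rcases hus.lt_or_gt with hlt | hgt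
  · obtain ⟨⟨x, y⟩, hq, ⟨h1, h2⟩ | ⟨h1, h2⟩⟩ : ∃ q ∈ M, Crossing (u, t) q := by
      by_contra! h
      exact (htopmost u t ⟨hblkM, h⟩).not_gt hlt
    · refine ⟨(x, y), mk_mem_satisfy.2 (Or.inr ⟨hq, ?_, h2.ne⟩), h1, h2⟩
      rintro rfl
      exact (hinv.lt_partner hst hq).not_gt h2
    · exact (hst.2 _ hq (Or.inr ⟨h1.trans hlt, h2⟩)).elim
  · rcases hout with ⟨a, ha, hua⟩ | ⟨b, hb, hbt⟩
    · rcases mk_mem_satisfy.1 ha with ⟨rfl, -⟩ | ⟨-, -, h⟩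
      exacts [(hua.not_gt hgt).elim, (h rfl).elim]
    · rcases mk_mem_satisfy.1 hb with ⟨h, -⟩ | ⟨hb, -, -⟩
      exacts [(hus h).elim, (hst.2 _ hb (Or.inl ⟨hgt, hbt⟩)).elim]

lemma BlockingInvariant.crossedFromBelow_satisfy_of_fst_eq (hinv : I.BlockingInvariant M)
    (hst : I.NCBlocks M s t)
    (hfav : ∀ v, I.NCBlocks M s v → rk (I.mpref s t) ≤ rk (I.mpref s v)) (hvt : v ≠ t)
    (hblk : I.Blocks (satisfy M s t) s v) (hout : HasOutwardPartner (satisfy M s t) s v) :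
    CrossedFromBelow (satisfy M s t) s v := by
  obtain ⟨hacc, hnotin, hmc, hwc⟩ := hblk
  have hpref : rk (I.mpref s v) < rk (I.mpref s t) := hmc t self_mem_satisfy
  have hsvM : (s, v) ∉ M := fun h => (hst.1.2.2.1 v h).not_gt hpref
  have hblkM : I.Blocks M s v := by
    refine ⟨hacc, hsvM, fun b hb => hpref.trans (hst.1.2.2.1 b hb), fun a ha => hwc a ?_⟩
    exact mk_mem_satisfy.2 (Or.inr ⟨ha, fun h => hsvM (h ▸ ha), hvt⟩)
  obtain ⟨⟨x, y⟩, hq, ⟨h1, h2⟩ | ⟨h1, h2⟩⟩ : ∃ q ∈ M, Crossing (s, v) q := by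
    by_contra! h
    exact (hfav v ⟨hblkM, h⟩).not_gt hpref
  · refine ⟨(x, y), mk_mem_satisfy.2 (Or.inr ⟨hq, h1.ne', ?_⟩), h1, h2⟩
    rintro rfl
    exact (hinv.partner_lt hst hq).not_gt h1
  · have hvt' : v < t := h2.trans_le (not_lt.1 fun h => hst.2 _ hq (Or.inr ⟨h1, h⟩))
    rcases hout with ⟨a, ha, hsa⟩ | ⟨b, hb, hbv⟩
    · rcases mk_mem_satisfy.1 ha with ⟨-, h⟩ | ⟨ha, -, -⟩
      exacts [(hvt h).elim, (hst.2 _ ha (Or.inl ⟨hsa, hvt'⟩)).elim]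
    · rcases mk_mem_satisfy.1 hb with ⟨-, rfl⟩ | ⟨-, h, -⟩
      exacts [(hbv.not_gt hvt').elim, (h rfl).elim]

lemma BlockingInvariant.crossedFromBelow_satisfy_of_ne (hmat : I.IsMatching M)
    (hnc : Noncrossing M) (hinv : I.BlockingInvariant M) (hst : I.NCBlocks M s t)
    (hus : u ≠ s) (hvt : v ≠ t)
    (hblk : I.Blocks (satisfy M s t) u v) (hout : HasOutwardPartner (satisfy M s t) u v) :
    CrossedFromBelow (satisfy M s t) u v := by
  by_cases hwin : u < s ∧ t < v
  · exact ⟨(s, t), self_mem_satisfy, hwin⟩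
  have hout' : HasOutwardPartner M u v := by
    refine hout.imp (fun ⟨a, ha, h⟩ => ⟨a, ?_, h⟩) (fun ⟨b, hb, h⟩ => ⟨b, ?_, h⟩)
    · exact (mk_mem_satisfy.1 ha).resolve_left (fun h => hvt h.2) |>.1
    · exact (mk_mem_satisfy.1 hb).resolve_left (fun h => hus h.1) |>.1
  by_cases hut : (u, t) ∈ M
  · have hvt' : v < t := hvt.lt_of_le (not_lt.1 fun h => hwin ⟨hinv.partner_lt hst hut, h⟩)
    rcases hout' with ⟨a, ha, hua⟩ | ⟨b, hb, hbv⟩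
    · exact (hnc _ hut _ ha (Or.inl ⟨hua, hvt'⟩)).elim
    · obtain rfl : b = t := congrArg Prod.snd (hmat.2 _ hb _ hut (Or.inl rfl))
      exact (lt_asymm hbv hvt').elim
  by_cases hsv : (s, v) ∈ M
  · have hsu : s < u := hus.symm.lt_of_le (not_lt.1 fun h => hwin ⟨h, hinv.lt_partner hst hsv⟩)
    rcases hout' with ⟨a, ha, hua⟩ | ⟨b, hb, hbv⟩
    · obtain rfl : a = s := congrArg Prod.fst (hmat.2 _ ha _ hsv (Or.inr rfl))
      exact (lt_asymm hua hsu).elim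
    · exact (hnc _ hsv _ hb (Or.inl ⟨hsu, hbv⟩)).elim
  have hblkM : I.Blocks M u v := by
    obtain ⟨hacc, hnotin, hmc, hwc⟩ := hblk
    refine ⟨hacc, fun h => hnotin (mk_mem_satisfy.2 (Or.inr ⟨h, hus, hvt⟩)),
      fun b hb => hmc b ?_, fun a ha => hwc a ?_⟩
    · exact mk_mem_satisfy.2 (Or.inr ⟨hb, hus, fun h => hut (h ▸ hb)⟩)
    · exact mk_mem_satisfy.2 (Or.inr ⟨ha, fun h => hsv (h ▸ ha), hvt⟩)
  obtain ⟨⟨x, y⟩, hp, h1, h2⟩ := hinv u v hblkM hout'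
  refine ⟨(x, y), mk_mem_satisfy.2 (Or.inr ⟨hp, ?_, ?_⟩), h1, h2⟩
  · rintro rfl
    exact hwin ⟨h1, (hinv.lt_partner hst hp).trans h2⟩
  · rintro rfl
    exact hwin ⟨h1.trans (hinv.partner_lt hst hp), h2⟩

lemma BlockingInvariant.satisfy (hmat : I.IsMatching M) (hnc : Noncrossing M)
    (hinv : I.BlockingInvariant M) (hst : I.NCBlocks M s t)
    (htopmost : ∀ u v, I.NCBlocks M u v → s ≤ u)
    (hfav : ∀ v, I.NCBlocks M s v → rk (I.mpref s t) ≤ rk (I.mpref s v)) :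
    I.BlockingInvariant (satisfy M s t) := by
  intro u v hblk hout
  rcases eq_or_ne v t with rfl | hvt
  · refine hinv.crossedFromBelow_satisfy_of_snd_eq hst htopmost ?_ hblk hout
    rintro rfl
    exact hblk.2.1 self_mem_satisfy
  rcases eq_or_ne u s with rfl | hus
  · exact hinv.crossedFromBelow_satisfy_of_fst_eq hst hfav hvt hblk hout
  · exact hinv.crossedFromBelow_satisfy_of_ne hmat hnc hst hus hvt hblk hout

theorem exists_isWSNM [Finite Mty] [Finite Wty] (I : SMTI Mty Wty) : ∃ M, I.IsWSNM M := by
  obtain ⟨M, ⟨hmat, hnc, hinv⟩, hmin⟩ :=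
    (InvImage.wf (fun M => toLex (womanRank I M)) wellFounded_lt).has_min
      {M | I.IsMatching M ∧ Noncrossing M ∧ I.BlockingInvariant M}
      ⟨∅, by simp [IsMatching, Noncrossing, BlockingInvariant, HasOutwardPartner]⟩
  refine ⟨M, hmat, hnc, fun s₀ t₀ h₀ => ?_⟩
  -- satisfy the noncrossing blocking pair with the topmost man, and his favourite among them
  obtain ⟨⟨s, t⟩, hst, hlex⟩ := Set.exists_min_image {q : Mty × Wty | I.NCBlocks M q.1 q.2}
    (fun q => toLex (q.1, rk (I.mpref q.1 q.2))) (Set.toFinite _) ⟨(s₀, t₀), h₀⟩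
  have htopmost : ∀ u v, I.NCBlocks M u v → s ≤ u := fun u v h =>
    (Prod.Lex.toLex_le_toLex'.1 (hlex (u, v) h)).1
  have hfav : ∀ v, I.NCBlocks M s v → rk (I.mpref s t) ≤ rk (I.mpref s v) := fun v h =>
    (Prod.Lex.toLex_le_toLex'.1 (hlex (s, v) h)).2 rfl
  exact hmin (satisfy M s t)
    ⟨hmat.satisfy hst.1.1, hnc.satisfy hst.2, hinv.satisfy hmat hnc hst htopmost hfav⟩
    (womanRank_satisfy_lt hst.1.1 hst.1.2.2.2 fun b hb => hinv.lt_partner hst hb)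

end LinearOrder

theorem isWSNM_iff_isSemiWSNMWith_of_isTop [PartialOrder Mty] [PartialOrder Wty]
    {I : SMTI Mty Wty} {m : Mty} {w : Wty} (hm : IsTop m) (hw : IsTop w)
    (hm_acc : ∀ y, I.Acc m y ↔ y = w) (hw_acc : ∀ x, I.Acc x w ↔ x = m)
    (M : Finset (Mty × Wty)) : I.IsWSNM M ↔ I.IsSemiWSNMWith M (m, w) := by
  constructor
  · rintro ⟨hmat, hnc, hnb⟩
    have hmw : (m, w) ∈ M := by
      by_contra hmw
      refine hnb m w ⟨⟨(hm_acc w).2 rfl, hmw, fun y hy => ?_, fun x hx => ?_⟩, fun q _ => ?_⟩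
      · obtain rfl := (hm_acc y).1 (hmat.1 _ hy)
        exact (hmw hy).elim
      · obtain rfl := (hw_acc x).1 (hmat.1 _ hx)
        exact (hmw hx).elim
      · rintro (⟨h, -⟩ | ⟨-, h⟩)
        exacts [(hm q.1).not_gt h, (hw q.2).not_gt h]
    exact ⟨hmat, hnc, ⟨hmw, fun q _ => ⟨hm q.1, hw q.2⟩⟩, fun u v h => (hnb u v h).elim⟩
  · rintro ⟨hmat, hnc, hmax, hbeyond⟩
    refine ⟨hmat, hnc, fun u v h => ?_⟩
    obtain ⟨hu, hv⟩ := hbeyond u v h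
    obtain rfl := (hm u).antisymm hu
    obtain rfl := (hw v).antisymm hv
    exact h.1.2.1 hmax.1

theorem opt_eq_X_of_isWSNM_iff {nm nw : ℕ} {I : SMTI (Fin nm) (Fin nw)} {i : Fin nm}
    {j : Fin nw} (h : ∀ M, I.IsWSNM M ↔ I.IsSemiWSNMWith M (i, j)) (hex : ∃ M, I.IsWSNM M) :
    (I.opt : WithBot ℕ) = I.X i j := by
  simp only [X, opt, ← h, if_pos hex]

lemma padded_acc_last_left {n : ℕ} (I' : SMTI (Fin n) (Fin n)) (w : Fin (n + 2)) :
    (padded I').Acc (Fin.last (n + 1)) w ↔ w = Fin.last (n + 1) := by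
  simp only [Acc, padded, Fin.val_last, Fin.ext_iff]
  split_ifs <;> simp_all
  omega

lemma padded_acc_last_right {n : ℕ} (I' : SMTI (Fin n) (Fin n)) (m : Fin (n + 2)) :
    (padded I').Acc m (Fin.last (n + 1)) ↔ m = Fin.last (n + 1) := by
  simp only [Acc, padded, Fin.val_last, Fin.ext_iff]
  split_ifs <;> simp_all
  omega

end SMTI

theorem stmt11_general {n : ℕ} (I' : SMTI (Fin n) (Fin n)) :
    (∀ M : Finset (Fin (n + 2) × Fin (n + 2)),
      (SMTI.padded I').IsWSNM M ↔
        (SMTI.padded I').IsSemiWSNMWith M (Fin.last (n + 1), Fin.last (n + 1))) ∧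
    ((SMTI.padded I').opt : WithBot ℕ) =
      SMTI.X (SMTI.padded I') (Fin.last (n + 1)) (Fin.last (n + 1)) := by
  have hiff := SMTI.isWSNM_iff_isSemiWSNMWith_of_isTop (I := SMTI.padded I')
    (Fin.le_last ·) (Fin.le_last ·) (SMTI.padded_acc_last_left I') (SMTI.padded_acc_last_right I')
  exact ⟨hiff, SMTI.opt_eq_X_of_isWSNM_iff hiff (SMTI.exists_isWSNM _)⟩

/-- for the padded instance `I` of an SMI instance, a matching `M` is a
WSNM of `I` iff it is a semi-WSNM of `I` with maximum pair `(m_{n+1}, w_{n+1})`;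
consequently `opt I = X(n+1, n+1)`. -/
theorem stmt11 {n : ℕ} (I' : SMTI (Fin n) (Fin n)) (hI' : I'.NoTies) :
    (∀ M : Finset (Fin (n + 2) × Fin (n + 2)),
      (SMTI.padded I').IsWSNM M ↔
        (SMTI.padded I').IsSemiWSNMWith M (Fin.last (n + 1), Fin.last (n + 1))) ∧
    ((SMTI.padded I').opt : WithBot ℕ) =
      SMTI.X (SMTI.padded I') (Fin.last (n + 1)) (Fin.last (n + 1)) :=
  stmt11_general I'
end
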